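/- If 1 ≤ x < 2, then for every n ≥ 0 the logarithm recurrence satisfies Eₙ ≤ x < Eₙ · ∏_{k=n}^∞ (1 + 2⁻ᵏ). -/

import Mathlib

/-!
Write `Pₙ = ∏_{k ≥ n} (1 + 2⁻ᵏ)`, so that `Pₙ = (1 + 2⁻ⁿ) Pₙ₊₁`. The invariant `Eₙ ≤ x < Eₙ Pₙ`
is kept by each step: when the factor `1 + 2⁻ⁿ` is taken, `Eₙ₊₁ Pₙ₊₁ = Eₙ Pₙ`; when it is
refused, `x < Eₙ (1 + 2⁻ⁿ) ≤ Eₙ Pₙ₊₁`. The last inequality, and `x < 2 < P₀` at the start, both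
come from `∏ (1 + aₖ) ≥ 1 + ∑ aₖ`, since `∑_{k > n} 2⁻ᵏ = 2⁻ⁿ`.
-/

/-- Restoring shift-and-add recurrence for computing `ln x`:
`(logRec x n).1 = Eₙ` and `(logRec x n).2 = Lₙ`, with `E₀ = 1`, `L₀ = 0`,
`dₙ = 1` iff `Eₙ (1 + 2⁻ⁿ) ≤ x`, `Eₙ₊₁ = Eₙ (1 + dₙ 2⁻ⁿ)`,
`Lₙ₊₁ = Lₙ + dₙ ln (1 + 2⁻ⁿ)`. -/
noncomputable def logRec (x : ℝ) : ℕ → ℝ × ℝ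
  | 0 => (1, 0)
  | n + 1 =>
    let p := logRec x n
    if p.1 * (1 + (2 : ℝ) ^ (-(n : ℤ))) ≤ x then
      (p.1 * (1 + (2 : ℝ) ^ (-(n : ℤ))), p.2 + Real.log (1 + (2 : ℝ) ^ (-(n : ℤ))))
    else p

theorem Finset.one_add_sum_le_prod_one_add {ι R : Type*} [CommSemiring R] [PartialOrder R]
    [IsOrderedRing R] (s : Finset ι) {f : ι → R} (hf : ∀ i ∈ s, 0 ≤ f i) :
    1 + ∑ i ∈ s, f i ≤ ∏ i ∈ s, (1 + f i) := by
  classical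
  induction s using Finset.induction_on with
  | empty => simp
  | insert a s ha ih =>
    rw [Finset.sum_insert ha, Finset.prod_insert ha]
    have hfa : 0 ≤ f a := hf a (Finset.mem_insert_self a s)
    have hs : 0 ≤ ∑ i ∈ s, f i := Finset.sum_nonneg fun i hi ↦ hf i (Finset.mem_insert_of_mem hi)
    have ih := ih fun i hi ↦ hf i (Finset.mem_insert_of_mem hi)
    calc 1 + (f a + ∑ i ∈ s, f i)
        ≤ 1 + (f a + ∑ i ∈ s, f i) + f a * ∑ i ∈ s, f i :=
          le_add_of_nonneg_right (mul_nonneg hfa hs)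
      _ = (1 + f a) * (1 + ∑ i ∈ s, f i) := by ring
      _ ≤ (1 + f a) * ∏ i ∈ s, (1 + f i) :=
          mul_le_mul_of_nonneg_left ih (add_nonneg zero_le_one hfa)

theorem Real.one_add_tsum_le_tprod_one_add {ι : Type*} {f : ι → ℝ} (hf : Summable f)
    (hf₀ : ∀ i, 0 ≤ f i) : 1 + ∑' i, f i ≤ ∏' i, (1 + f i) :=
  le_of_tendsto_of_tendsto' (hf.hasSum.const_add 1)
    (Real.multipliable_one_add_of_summable hf).hasProd
    fun s ↦ s.one_add_sum_le_prod_one_add fun i _ ↦ hf₀ i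

namespace LogRec

noncomputable def tailProd (n : ℕ) : ℝ :=
  ∏' k : ℕ, (1 + (2 : ℝ) ^ (-((n + k : ℕ) : ℤ)))

theorem two_zpow_neg_natCast (m : ℕ) : (2 : ℝ) ^ (-(m : ℤ)) = (1 / 2) ^ m := by
  rw [zpow_neg, zpow_natCast, one_div, inv_pow]

theorem hasSum_two_zpow_neg_add (n : ℕ) :
    HasSum (fun k : ℕ ↦ (2 : ℝ) ^ (-((n + k : ℕ) : ℤ))) ((2 : ℝ) ^ (-(n : ℤ)) * 2) := by
  simp only [two_zpow_neg_natCast, pow_add]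
  exact hasSum_geometric_two.mul_left _

theorem tailProd_eq_mul_tailProd_succ (n : ℕ) :
    tailProd n = (1 + (2 : ℝ) ^ (-(n : ℤ))) * tailProd (n + 1) := by
  have hshift : (fun k : ℕ ↦ 1 + (2 : ℝ) ^ (-((n + (k + 1) : ℕ) : ℤ)))
      = fun k ↦ 1 + (2 : ℝ) ^ (-((n + 1 + k : ℕ) : ℤ)) := by
    funext k; rw [Nat.add_right_comm, add_assoc]
  have hsucc := Real.multipliable_one_add_of_summable (hasSum_two_zpow_neg_add (n + 1)).summable
  rw [tailProd, tailProd, tprod_eq_zero_mul' (hshift ▸ hsucc), hshift, add_zero]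

theorem one_add_two_mul_le_tailProd (n : ℕ) : 1 + (2 : ℝ) ^ (-(n : ℤ)) * 2 ≤ tailProd n := by
  have hsum := hasSum_two_zpow_neg_add n
  rw [← hsum.tsum_eq]
  exact Real.one_add_tsum_le_tprod_one_add hsum.summable fun k ↦ by positivity

theorem one_add_le_tailProd_succ (n : ℕ) : 1 + (2 : ℝ) ^ (-(n : ℤ)) ≤ tailProd (n + 1) := by
  have h := one_add_two_mul_le_tailProd (n + 1)
  rwa [two_zpow_neg_natCast, pow_succ, mul_assoc, one_div_mul_cancel two_ne_zero, mul_one,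
    ← two_zpow_neg_natCast] at h

theorem two_lt_tailProd_zero : 2 < tailProd 0 := by
  have h := one_add_two_mul_le_tailProd 0
  norm_num at h
  linarith

end LogRec

theorem logRec_fst_succ_of_le {x : ℝ} {n : ℕ}
    (h : (logRec x n).1 * (1 + (2 : ℝ) ^ (-(n : ℤ))) ≤ x) :
    (logRec x (n + 1)).1 = (logRec x n).1 * (1 + (2 : ℝ) ^ (-(n : ℤ))) := by
  rw [logRec, if_pos h]

theorem logRec_fst_succ_of_lt {x : ℝ} {n : ℕ}
    (h : x < (logRec x n).1 * (1 + (2 : ℝ) ^ (-(n : ℤ)))) :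
    (logRec x (n + 1)).1 = (logRec x n).1 := by
  rw [logRec, if_neg h.not_ge]

theorem logRec_fst_pos (x : ℝ) (n : ℕ) : 0 < (logRec x n).1 := by
  induction n with
  | zero => simp [logRec]
  | succ n ih =>
    rw [logRec]
    split_ifs
    · positivity
    · exact ih

open LogRec in
/-- If `1 ≤ x < 2`, then for every `n`, `Eₙ ≤ x < Eₙ · ∏_{k=n}^∞ (1 + 2⁻ᵏ)`. -/
theorem logRec_sandwich (x : ℝ) (hx1 : 1 ≤ x) (hx2 : x < 2) (n : ℕ) :
    (logRec x n).1 ≤ x ∧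
      x < (logRec x n).1 * ∏' k : ℕ, (1 + (2 : ℝ) ^ (-((n + k : ℕ) : ℤ))) := by
  change _ ∧ x < _ * tailProd n
  induction n with
  | zero => simpa [logRec, hx1] using hx2.trans two_lt_tailProd_zero
  | succ n ih =>
    obtain ⟨hle, hlt⟩ := ih
    rw [tailProd_eq_mul_tailProd_succ, ← mul_assoc] at hlt
    rcases le_or_gt ((logRec x n).1 * (1 + (2 : ℝ) ^ (-(n : ℤ)))) x with htake | hrefuse
    · rw [logRec_fst_succ_of_le htake]
      exact ⟨htake, hlt⟩
    · rw [logRec_fst_succ_of_lt hrefuse]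
      exact ⟨hle, hrefuse.trans_le <|
        mul_le_mul_of_nonneg_left (one_add_le_tailProd_succ n) (logRec_fst_pos x n).le⟩
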